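/- arXiv:2405.17783 — 2 statements merged into one kernel-verified Lean document; each statement's English description precedes it below -/
import Mathlib

section
/- There exist positive constants β₁, β₂ (depending on h, the masses, and α but not on x, y) such that for all x, y ∈ E, φ_h(x,y) ≤ (β₁‖x−y‖² + β₂‖x−y‖^{2−α})^{1/2}. -/
/-!
For fixed `r > ‖x - y‖` the Maderna bound has the form `A / T + B * T` with
`A = η₁ r²` and `B = h + η₂ / r^α`; at `T = √A / √B` this equals `√(4AB)`, and
`4AB = 4η₁h r² + 4η₁η₂ r^(2-α)`. The resulting bound for `φ_h(x,y)` is continuous in `r`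
(here `α < 2` is needed at `‖x - y‖ = 0`), so letting `r` decrease to `‖x - y‖` proves it.
-/

open Real

theorem exists_pos_div_add_mul_eq_sqrt {A B : ℝ} (hA : 0 < A) (hB : 0 < B) :
    ∃ T > 0, A / T + B * T = √(4 * A * B) := by
  obtain ⟨a, ha, rfl⟩ : ∃ a > 0, A = a ^ 2 := ⟨√A, sqrt_pos.mpr hA, (sq_sqrt hA.le).symm⟩
  obtain ⟨b, hb, rfl⟩ : ∃ b > 0, B = b ^ 2 := ⟨√B, sqrt_pos.mpr hB, (sq_sqrt hB.le).symm⟩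
  refine ⟨a / b, by positivity, ?_⟩
  rw [show 4 * a ^ 2 * b ^ 2 = (2 * a * b) ^ 2 by ring, sqrt_sq (by positivity)]
  field_simp
  ring

theorem sq_mul_add_div_rpow {r : ℝ} (hr : 0 < r) (h η α : ℝ) :
    r ^ 2 * (h + η / r ^ α) = h * r ^ 2 + η * r ^ (2 - α) := by
  rw [rpow_sub hr, rpow_two]
  ring

theorem exists_time_maderna_bound_eq_sqrt {α h η₁ η₂ r : ℝ} (hh : 0 ≤ h) (hη₁ : 0 < η₁)
    (hη₂ : 0 < η₂) (hr : 0 < r) :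
    ∃ T > 0, η₁ * r ^ 2 / T + η₂ * T / r ^ α + h * T =
      √(4 * η₁ * h * r ^ 2 + 4 * η₁ * η₂ * r ^ (2 - α)) := by
  obtain ⟨T, hT, hopt⟩ := exists_pos_div_add_mul_eq_sqrt
    (A := η₁ * r ^ 2) (B := h + η₂ / r ^ α) (by positivity) (by positivity)
  refine ⟨T, hT, ?_⟩
  have hrα : 0 < r ^ α := rpow_pos_of_pos hr α
  calc η₁ * r ^ 2 / T + η₂ * T / r ^ α + h * T
      = η₁ * r ^ 2 / T + (h + η₂ / r ^ α) * T := by field_simp; ring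
    _ = √(4 * η₁ * (r ^ 2 * (h + η₂ / r ^ α))) := by rw [hopt]; ring_nf
    _ = √(4 * η₁ * h * r ^ 2 + 4 * η₁ * η₂ * r ^ (2 - α)) := by
      rw [sq_mul_add_div_rpow hr]; ring_nf

theorem ContinuousAt.le_apply_of_forall_gt {X Y : Type*} [TopologicalSpace X] [LinearOrder X]
    [OrderTopology X] [DenselyOrdered X] [NoMaxOrder X] [TopologicalSpace Y] [Preorder Y]
    [OrderClosedTopology Y] {f : X → Y} {a : X} {c : Y} (hf : ContinuousAt f a)
    (hle : ∀ r > a, c ≤ f r) : c ≤ f a :=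
  ContinuousWithinAt.closure_le (s := Set.Ioi a) (by simp) continuousWithinAt_const
    hf.continuousWithinAt hle

theorem freeTimePotential_upper_bound_general
    {E : Type*} [NormedAddCommGroup E] [InnerProductSpace ℝ E]
    (α h : ℝ) (hα2 : α < 2) (hh : 0 < h)
    (φT : E → E → ℝ → ℝ) (φ : E → E → ℝ)
    (hφ_inf : ∀ x y T, 0 < T → φ x y ≤ φT x y T)
    (η₁ η₂ : ℝ) (hη₁ : 0 < η₁) (hη₂ : 0 < η₂)
    (hMaderna : ∀ x y : E, ∀ r T : ℝ, ‖x - y‖ < r → 0 < T →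
      φT x y T ≤ η₁ * r ^ 2 / T + η₂ * T / r ^ α + h * T) :
    ∃ β₁ > (0:ℝ), ∃ β₂ > (0:ℝ), ∀ x y : E,
      φ x y ≤ Real.sqrt (β₁ * ‖x - y‖ ^ 2 + β₂ * ‖x - y‖ ^ (2 - α)) := by
  refine ⟨4 * η₁ * h, by positivity, 4 * η₁ * η₂, by positivity, fun x y => ?_⟩
  have hcont : ContinuousAt
      (fun r : ℝ => √(4 * η₁ * h * r ^ 2 + 4 * η₁ * η₂ * r ^ (2 - α))) ‖x - y‖ := by
    have hrpow := continuousAt_rpow_const ‖x - y‖ (2 - α) (Or.inr (by linarith))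
    fun_prop
  refine hcont.le_apply_of_forall_gt fun r hr => ?_
  obtain ⟨T, hT, hbound⟩ :=
    exists_time_maderna_bound_eq_sqrt (α := α) hh.le hη₁ hη₂ ((norm_nonneg _).trans_lt hr)
  exact (hφ_inf x y T hT).trans ((hMaderna x y r T hr hT).trans hbound.le)

/-- given the Maderna estimate `φ_h(x,y;T) ≤ η₁ r²/T + η₂ T/r^α + hT`
(valid for all `r > ‖x−y‖` and `T > 0`) for the fixed-time action potential, and that
the free-time potential `φ_h(x,y)` is the nonnegative infimum over `T > 0`, there exist
constants `β₁, β₂ > 0` (independent of `x, y`) such that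
`φ_h(x,y) ≤ (β₁‖x−y‖² + β₂‖x−y‖^{2−α})^{1/2}`. -/
theorem freeTimePotential_upper_bound
    {E : Type*} [NormedAddCommGroup E] [InnerProductSpace ℝ E]
    (α h : ℝ) (hα : 0 < α) (hα2 : α < 2) (hh : 0 < h)
    (φT : E → E → ℝ → ℝ) (φ : E → E → ℝ)
    (hφ_nonneg : ∀ x y, 0 ≤ φ x y)
    (hφ_inf : ∀ x y T, 0 < T → φ x y ≤ φT x y T)
    (η₁ η₂ : ℝ) (hη₁ : 0 < η₁) (hη₂ : 0 < η₂)
    (hMaderna : ∀ x y : E, ∀ r T : ℝ, ‖x - y‖ < r → 0 < T →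
      φT x y T ≤ η₁ * r ^ 2 / T + η₂ * T / r ^ α + h * T) :
    ∃ β₁ > (0:ℝ), ∃ β₂ > (0:ℝ), ∀ x y : E,
      φ x y ≤ Real.sqrt (β₁ * ‖x - y‖ ^ 2 + β₂ * ‖x - y‖ ^ (2 - α)) :=
  freeTimePotential_upper_bound_general α h hα2 hh φT φ hφ_inf η₁ η₂ hη₁ hη₂ hMaderna
end

section
/- Upper bound for the action along a ray: if u ∈ S satisfies U(u) ≤ 2^α U(v) (e.g. u ∈ B_{δv̲}(v)) and 0 < r₁ < r₂, then (1/√(2h)) φ_h(r₁u, r₂u) ≤ (r₂ − r₁) + W_{α,v}(r₁,r₂), where W_{α,v}(r₁,r₂) = (2^α U(v)/(2h)) · ∫_{r₁}^{r₂} ρ^{−α} dρ (which equals (2^α U(v)/(2h(α−1)))(r₁^{1−α} − r₂^{1−α}) for α > 1, (2^α U(v)/(2h)) log(r₂/r₁) for α = 1, and (2^α U(v)/(2h(1−α)))(r₂^{1−α} − r₁^{1−α}) for α ∈ (0,1)). -/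
open MeasureTheory Classical

/-- The fixed-time action potential `φ_h(x,y;T)`. -/
noncomputable def fixedTimePotential {E : Type*} [NormedAddCommGroup E] [InnerProductSpace ℝ E]
    (U : E → ℝ) (h : ℝ) (x y : E) (T : ℝ) : ℝ :=
  sInf {A : ℝ | ∃ γ : ℝ → E, Differentiable ℝ γ ∧ γ 0 = x ∧ γ T = y ∧
    A = ∫ t in (0:ℝ)..T, (1 / 2 * ‖deriv γ t‖ ^ 2 + U (γ t) + h)}

/-- The free-time action potential `φ_h(x,y) = inf_{T>0} φ_h(x,y;T)`. -/
noncomputable def freeTimePotential {E : Type*} [NormedAddCommGroup E] [InnerProductSpace ℝ E]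
    (U : E → ℝ) (h : ℝ) (x y : E) : ℝ :=
  if x = y then 0 else sInf {A : ℝ | ∃ T > (0:ℝ), A = fixedTimePotential U h x y T}

/-! The straight ray from `r₁u` to `r₂u` traversed at speed `√(2h)` has kinetic energy `h`, so
its action is `2h·T` plus the potential term; since `U` is `(−α)`-homogeneous the latter becomes,
after the substitution `ρ = r₁ + √(2h) t`, `U(u)/√(2h) · ∫_{r₁}^{r₂} ρ^{−α} dρ`. Dividing by
`√(2h)` and using `U(u) ≤ 2^α U(v)` gives the bound. -/

section Potentials

variable {E : Type*} [NormedAddCommGroup E] [InnerProductSpace ℝ E]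
  {U : E → ℝ} {h : ℝ} {x y : E} {T : ℝ}

theorem action_nonneg (hU : ∀ q, 0 ≤ U q) (hh : 0 ≤ h) (hT : 0 ≤ T) (γ : ℝ → E) :
    0 ≤ ∫ t in (0:ℝ)..T, (1 / 2 * ‖deriv γ t‖ ^ 2 + U (γ t) + h) :=
  intervalIntegral.integral_nonneg hT fun t _ => by
    have := hU (γ t)
    positivity

theorem fixedTimePotential_nonneg (hU : ∀ q, 0 ≤ U q) (hh : 0 ≤ h) (hT : 0 ≤ T) :
    0 ≤ fixedTimePotential U h x y T :=
  Real.sInf_nonneg <| by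
    rintro A ⟨γ, -, -, -, rfl⟩
    exact action_nonneg hU hh hT γ

theorem fixedTimePotential_le_action (hU : ∀ q, 0 ≤ U q) (hh : 0 ≤ h) (hT : 0 ≤ T)
    {γ : ℝ → E} (hγ : Differentiable ℝ γ) (hγ₀ : γ 0 = x) (hγT : γ T = y) :
    fixedTimePotential U h x y T ≤
      ∫ t in (0:ℝ)..T, (1 / 2 * ‖deriv γ t‖ ^ 2 + U (γ t) + h) := by
  refine csInf_le ⟨0, ?_⟩ ⟨γ, hγ, hγ₀, hγT, rfl⟩
  rintro A ⟨γ', -, -, -, rfl⟩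
  exact action_nonneg hU hh hT γ'

theorem freeTimePotential_le_fixedTimePotential (hU : ∀ q, 0 ≤ U q) (hh : 0 ≤ h)
    (hT : 0 < T) : freeTimePotential U h x y ≤ fixedTimePotential U h x y T := by
  rw [freeTimePotential]
  split_ifs
  · exact fixedTimePotential_nonneg hU hh hT.le
  · refine csInf_le ⟨0, ?_⟩ ⟨T, hT, rfl⟩
    rintro A ⟨T', hT', rfl⟩
    exact fixedTimePotential_nonneg hU hh hT'.le

end Potentials

section Ray

variable {E : Type*} [NormedAddCommGroup E] [InnerProductSpace ℝ E]

theorem hasDerivAt_ray (r c : ℝ) (u : E) (t : ℝ) :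
    HasDerivAt (fun t : ℝ => (r + c * t) • u) (c • u) t := by
  simpa using (((hasDerivAt_id t).const_mul c).const_add r).smul_const u

variable {U : E → ℝ} {α h r c T : ℝ} {u : E}

theorem action_ray_integrand
    (hhom : ∀ (ρ : ℝ) (w : E), 0 < ρ → U (ρ • w) = ρ ^ (-α) * U w) (hu : ‖u‖ = 1)
    {t : ℝ} (hpos : 0 < r + c * t) :
    1 / 2 * ‖deriv (fun t : ℝ => (r + c * t) • u) t‖ ^ 2 + U ((r + c * t) • u) + h =
      (c ^ 2 / 2 + h) + U u * (c * t + r) ^ (-α) := by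
  rw [(hasDerivAt_ray r c u t).deriv, hhom _ u hpos, norm_smul, hu, mul_one, Real.norm_eq_abs,
    sq_abs, add_comm r]
  ring

theorem action_ray
    (hhom : ∀ (ρ : ℝ) (w : E), 0 < ρ → U (ρ • w) = ρ ^ (-α) * U w) (hu : ‖u‖ = 1)
    (hr : 0 < r) (hc : 0 < c) (hT : 0 ≤ T) :
    ∫ t in (0:ℝ)..T, (1 / 2 * ‖deriv (fun t : ℝ => (r + c * t) • u) t‖ ^ 2 +
        U ((r + c * t) • u) + h) =
      (c ^ 2 / 2 + h) * T + U u / c * ∫ ρ in r..r + c * T, ρ ^ (-α) := by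
  have hpos : ∀ t ∈ Set.uIcc 0 T, 0 < r + c * t := fun t ht => by
    rw [Set.uIcc_of_le hT] at ht
    nlinarith [ht.1]
  have hint : IntervalIntegrable (fun t : ℝ => (c * t + r) ^ (-α)) volume 0 T :=
    ContinuousOn.intervalIntegrable <| by
      refine ContinuousOn.rpow_const (by fun_prop) fun t ht => Or.inl ?_
      linarith [hpos t ht]
  rw [intervalIntegral.integral_congr fun t ht => action_ray_integrand hhom hu (hpos t ht),
    intervalIntegral.integral_add intervalIntegrable_const (hint.const_mul _),
    intervalIntegral.integral_const, intervalIntegral.integral_const_mul,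
    intervalIntegral.integral_comp_mul_add (fun ρ : ℝ => ρ ^ (-α)) hc.ne']
  simp only [mul_zero, zero_add, sub_zero, smul_eq_mul, add_comm r (c * T)]
  ring

end Ray

theorem action_along_ray_general
    {E : Type*} [NormedAddCommGroup E] [InnerProductSpace ℝ E]
    (α h : ℝ) (hh : 0 < h)
    (U : E → ℝ) (hU : ∀ q, 0 ≤ U q)
    (hhom : ∀ (ρ : ℝ) (w : E), 0 < ρ → U (ρ • w) = ρ ^ (-α) * U w)
    (u v : E) (hu : ‖u‖ = 1)
    (hUu : U u ≤ 2 ^ α * U v)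
    (r₁ r₂ : ℝ) (hr₁ : 0 < r₁) (hr : r₁ < r₂) :
    1 / Real.sqrt (2 * h) * freeTimePotential U h (r₁ • u) (r₂ • u) ≤
      (r₂ - r₁) + 2 ^ α * U v / (2 * h) * ∫ ρ in r₁..r₂, ρ ^ (-α) := by
  set s := Real.sqrt (2 * h)
  have hs : 0 < s := Real.sqrt_pos.mpr (by positivity)
  have hs2 : s ^ 2 = 2 * h := Real.sq_sqrt (by positivity)
  set T := (r₂ - r₁) / s
  have hT : 0 < T := div_pos (by linarith) hs
  have hsT : s * T = r₂ - r₁ := mul_div_cancel₀ _ hs.ne'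
  have hend : r₁ + s * T = r₂ := by linarith
  have hI : 0 ≤ ∫ ρ in r₁..r₂, ρ ^ (-α) :=
    intervalIntegral.integral_nonneg hr.le fun ρ hρ => Real.rpow_nonneg (hr₁.le.trans hρ.1) _
  have hfree : freeTimePotential U h (r₁ • u) (r₂ • u) ≤
      (s ^ 2 / 2 + h) * T + U u / s * ∫ ρ in r₁..r₂, ρ ^ (-α) := by
    rw [← hend, ← action_ray hhom hu hr₁ hs hT.le]
    exact (freeTimePotential_le_fixedTimePotential hU hh.le hT).trans
      (fixedTimePotential_le_action hU hh.le hT.le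
        (fun t => (hasDerivAt_ray r₁ s u t).differentiableAt) (by simp) rfl)
  calc 1 / s * freeTimePotential U h (r₁ • u) (r₂ • u)
      ≤ 1 / s * ((s ^ 2 / 2 + h) * T + U u / s * ∫ ρ in r₁..r₂, ρ ^ (-α)) := by gcongr
    _ = (r₂ - r₁) + U u / (2 * h) * ∫ ρ in r₁..r₂, ρ ^ (-α) := by
        rw [show h = s ^ 2 / 2 by linarith, ← hsT]
        field_simp
        ring
    _ ≤ (r₂ - r₁) + 2 ^ α * U v / (2 * h) * ∫ ρ in r₁..r₂, ρ ^ (-α) := by gcongr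

/-- action bound along a ray. If `U` is `(−α)`-homogeneous, `‖u‖ = 1` and
`U(u) ≤ 2^α U(v)`, then for `0 < r₁ < r₂`,
`(1/√(2h)) φ_h(r₁u, r₂u) ≤ (r₂ − r₁) + (2^α U(v)/(2h)) ∫_{r₁}^{r₂} ρ^{−α} dρ`. -/
theorem action_along_ray
    {E : Type*} [NormedAddCommGroup E] [InnerProductSpace ℝ E]
    (α h : ℝ) (hα : 0 < α) (hα2 : α < 2) (hh : 0 < h)
    (U : E → ℝ) (hU : ∀ q, 0 ≤ U q)
    (hhom : ∀ (ρ : ℝ) (w : E), 0 < ρ → U (ρ • w) = ρ ^ (-α) * U w)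
    (u v : E) (hu : ‖u‖ = 1) (hv : ‖v‖ = 1)
    (hUu : U u ≤ 2 ^ α * U v)
    (r₁ r₂ : ℝ) (hr₁ : 0 < r₁) (hr : r₁ < r₂) :
    1 / Real.sqrt (2 * h) * freeTimePotential U h (r₁ • u) (r₂ • u) ≤
      (r₂ - r₁) + 2 ^ α * U v / (2 * h) * ∫ ρ in r₁..r₂, ρ ^ (-α) :=
  action_along_ray_general α h hh U hU hhom u v hu hUu r₁ r₂ hr₁ hr
end
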